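/- Every Space KAM closure is typable with an empty multiset type: for every closure c occurring in a reachable state, there exists k > 0 and a derivation ⊢ c : []^k; similarly, every environment e is typable with a dry context Γ with dom(Γ) = dom(e). -/

import Mathlib

/-! ## Lambda terms, substitution, weak head reduction -/

inductive Tm : Type
  | var : ℕ → Tm
  | lam : ℕ → Tm → Tm
  | app : Tm → Tm → Tm
deriving DecidableEq

def subst (x : ℕ) (u : Tm) : Tm → Tm
  | .var y => if y = x then u else .var y
  | .lam y t => if y = x then .lam y t else .lam y (subst x u t)
  | .app t s => .app (subst x u t) (subst x u s)

def fv : Tm → Finset ℕ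
  | .var x => {x}
  | .lam x t => fv t \ {x}
  | .app t u => fv t ∪ fv u

/-- Weak head reduction: `(λx.t) u r₁ … r_h →wh t[x:=u] r₁ … r_h`. -/
inductive Wh : Tm → Tm → Prop
  | beta (x : ℕ) (t u : Tm) : Wh (.app (.lam x t) u) (subst x u t)
  | appL {t t' : Tm} (u : Tm) : Wh t t' → Wh (.app t u) (.app t' u)

/-! ## Space KAM -/

mutual
inductive Clo : Type
  | mk : Tm → Env → Clo
inductive Env : Type
  | nil : Env
  | cons : ℕ → Clo → Env → Env
end

def Env.lookup : Env → ℕ → Option Clo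
  | .nil, _ => none
  | .cons y c e, x => if x = y then some c else e.lookup x

def Env.dom : Env → Finset ℕ
  | .nil => ∅
  | .cons y _ e => insert y e.dom

/-- `e.restrict V` is the restriction `e|_V` of `e` to the variables in `V`. -/
def Env.restrict : Env → Finset ℕ → Env
  | .nil, _ => .nil
  | .cons y c e, V => if y ∈ V then .cons y c (e.restrict V) else e.restrict V

structure State : Type where
  tm : Tm
  env : Env
  stk : List Clo

/-- Space KAM transitions (with unchaining and eager garbage collection). -/
inductive SpKAM : State → State → Prop
  | sea_v {t : Tm} {x : ℕ} {e : Env} {S : List Clo} {c : Clo} :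
      e.lookup x = some c →
      SpKAM ⟨.app t (.var x), e, S⟩ ⟨t, e.restrict (fv t), c :: S⟩
  | sea_nv {t u : Tm} {e : Env} {S : List Clo} :
      (∀ y, u ≠ .var y) →
      SpKAM ⟨.app t u, e, S⟩ ⟨t, e.restrict (fv t), Clo.mk u (e.restrict (fv u)) :: S⟩
  | beta_w {x : ℕ} {t : Tm} {e : Env} {c : Clo} {S : List Clo} :
      x ∉ fv t →
      SpKAM ⟨.lam x t, e, c :: S⟩ ⟨t, e, S⟩
  | beta_nw {x : ℕ} {t : Tm} {e : Env} {c : Clo} {S : List Clo} :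
      x ∈ fv t →
      SpKAM ⟨.lam x t, e, c :: S⟩ ⟨t, .cons x c e, S⟩
  | sub {x : ℕ} {e e' : Env} {u : Tm} {S : List Clo} :
      e.lookup x = some (Clo.mk u e') →
      SpKAM ⟨.var x, e, S⟩ ⟨u, e', S⟩

/-- A state is reachable if it is the target of a run from an initial state
`(t₀, ε, ε)` with `t₀` closed. -/
def Reachable (s : State) : Prop :=
  ∃ t₀ : Tm, fv t₀ = ∅ ∧ Relation.ReflTransGen SpKAM ⟨t₀, .nil, []⟩ s

mutual
def Clo.closures : Clo → List Clo
  | .mk t e => .mk t e :: e.closures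
def Env.closures : Env → List Clo
  | .nil => []
  | .cons _ c e => c.closures ++ e.closures
end

/-- All closures occurring in a state (including the active closure). -/
def State.closures (s : State) : List Clo :=
  (Clo.mk s.tm s.env).closures ++ (s.stk.map Clo.closures).flatten

mutual
def Clo.size : Clo → ℕ
  | .mk _ e => 1 + e.size
def Env.size : Env → ℕ
  | .nil => 0
  | .cons _ c e => c.size + e.size
end

def State.size (s : State) : ℕ := s.env.size + (s.stk.map Clo.size).sum

def Clo.env : Clo → Env
  | .mk _ e => e

/-- Final states: no transition applies. -/
def Final (s : State) : Prop := ∀ s', ¬ SpKAM s s'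

/-- Runs together with their abstract space consumption (the maximum of the
sizes of the traversed states). -/
inductive RunSp : State → State → ℕ → Prop
  | refl (s : State) : RunSp s s s.size
  | step {s s' s'' : State} {m : ℕ} :
      SpKAM s s' → RunSp s' s'' m → RunSp s s'' (max s.size m)

/-! ## Closure types -/

mutual
inductive LTy : Type
  | star : LTy
  | arr : MTy → LTy → LTy
inductive MTy : Type
  | mk : List LTy → ℕ → MTy
end

def MTy.idx : MTy → ℕ | .mk _ k => k

def MTy.union : MTy → MTy → MTy
  | .mk l k, .mk l' _ => .mk (l ++ l') k

def LTy.size : LTy → ℕ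
  | .star => 0
  | .arr M A => M.idx + A.size

/-- Type contexts: finitely supported assignments of closure types to
variables (outside the domain the default `[]^1` is assigned). -/
structure Ctx : Type where
  dom : Finset ℕ
  ty : ℕ → MTy
  off_dom : ∀ x ∉ dom, ty x = MTy.mk [] 1

def Ctx.size (Γ : Ctx) : ℕ := Γ.dom.sum fun x => (Γ.ty x).idx

def Ctx.Dry (Γ : Ctx) : Prop :=
  ∀ x ∈ Γ.dom, ∃ k, 0 < k ∧ Γ.ty x = MTy.mk [] k

def Ctx.Summable (Γ Δ : Ctx) : Prop :=
  ∀ x ∈ Γ.dom ∩ Δ.dom, (Γ.ty x).idx = (Δ.ty x).idx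

def Ctx.empty : Ctx := ⟨∅, fun _ => MTy.mk [] 1, fun _ _ => rfl⟩

def Ctx.single (x : ℕ) (M : MTy) : Ctx :=
  ⟨{x}, fun y => if y = x then M else MTy.mk [] 1, by
    intro y hy
    simp only [Finset.mem_singleton] at hy
    simp [hy]⟩

def Ctx.extend (Γ : Ctx) (x : ℕ) (M : MTy) : Ctx :=
  ⟨insert x Γ.dom, Function.update Γ.ty x M, by
    intro y hy
    simp only [Finset.mem_insert, not_or] at hy
    rw [Function.update_of_ne hy.1]
    exact Γ.off_dom y hy.2⟩

def Ctx.union (Γ Δ : Ctx) : Ctx :=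
  ⟨Γ.dom ∪ Δ.dom,
   fun x =>
     if x ∈ Γ.dom then
       (if x ∈ Δ.dom then (Γ.ty x).union (Δ.ty x) else Γ.ty x)
     else Δ.ty x,
   by
    intro x hx
    simp only [Finset.mem_union, not_or] at hx
    simp [hx.1, hx.2, Δ.off_dom x hx.2]⟩

/-! ## The weighted closure type system (space weights), with derivation
sizes (counting all rules except T-many, T-none, T-cl, T-env). -/

mutual
/-- `TJ Γ t A w n`: the judgment `Γ ⊢ t : A` is derivable with weight `w`
by a derivation of size `n`. -/
inductive TJ : Ctx → Tm → LTy → ℕ → ℕ → Prop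
  | var {x : ℕ} {A : LTy} {k : ℕ} : 0 < k →
      TJ (Ctx.single x (.mk [A] k)) (.var x) A (k + A.size) 1
  | lamStar {Γ : Ctx} {x : ℕ} {t : Tm} :
      Γ.Dry → Γ.dom = fv (.lam x t) →
      TJ Γ (.lam x t) .star Γ.size 1
  | lam1 {Γ : Ctx} {x : ℕ} {M : MTy} {t : Tm} {A : LTy} {w n : ℕ} :
      x ∉ Γ.dom →
      TJ (Γ.extend x M) t A w n →
      TJ Γ (.lam x t) (.arr M A) w (n + 1)
  | lam2 {Γ : Ctx} {x : ℕ} {t : Tm} {A : LTy} {k w n : ℕ} :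
      x ∉ Γ.dom → 0 < k →
      TJ Γ t A w n →
      TJ Γ (.lam x t) (.arr (.mk [] k) A) (max w (Γ.size + A.size + k)) (n + 1)
  | app1 {Γ Δ : Ctx} {t u : Tm} {M : MTy} {A : LTy} {w v n m : ℕ} :
      Γ.Summable Δ →
      TJ Γ t (.arr M A) w n → MJ Δ u M v m →
      TJ (Γ.union Δ) (.app t u) A (max w v) (n + m + 1)
  | app2 {Γ : Ctx} {x : ℕ} {t : Tm} {M : MTy} {A : LTy} {w n : ℕ} :
      Γ.Summable (Ctx.single x M) →
      TJ Γ t (.arr M A) w n →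
      TJ (Γ.union (Ctx.single x M)) (.app t (.var x)) A w (n + 1)

/-- `MJ Γ t 𝒜 w n`: multiset judgment (rules T-none / T-many). -/
inductive MJ : Ctx → Tm → MTy → ℕ → ℕ → Prop
  | none {Γ : Ctx} {t : Tm} :
      Γ.Dry → Γ.dom = fv t →
      MJ Γ t (.mk [] (1 + Γ.size)) 0 0
  | one {Γ : Ctx} {t : Tm} {A : LTy} {w n : ℕ} :
      TJ Γ t A w n →
      MJ Γ t (.mk [A] (1 + Γ.size)) w n
  | cons {Γ Δ : Ctx} {t : Tm} {A : LTy} {l : List LTy} {w v n m : ℕ} :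
      Γ.Summable Δ →
      TJ Γ t A w n → MJ Δ t (.mk l (1 + Δ.size)) v m →
      MJ (Γ.union Δ) t (.mk (A :: l) (1 + (Γ.union Δ).size)) (max w v) (n + m)
end

/-! ## Typing of machine components -/

mutual
/-- `EJ e Γ w n`: rule T-env, typing an environment with a type context. -/
inductive EJ : Env → Ctx → ℕ → ℕ → Prop
  | nil : EJ .nil Ctx.empty 0 0
  | cons {e : Env} {Γ : Ctx} {x : ℕ} {c : Clo} {M : MTy} {w v n m : ℕ} :
      x ∉ Γ.dom →
      CJ c M w n → EJ e Γ v m →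
      EJ (.cons x c e) (Γ.extend x M) (max w v) (n + m)

/-- `CJ c 𝒜 w n`: rule T-cl, typing a closure with a closure type. -/
inductive CJ : Clo → MTy → ℕ → ℕ → Prop
  | mk {t : Tm} {e : Env} {Γ : Ctx} {M : MTy} {w v n m : ℕ} :
      EJ e Γ w n → MJ Γ t M v m →
      CJ (.mk t e) M (max w v) (n + m)
end

/-- Typing of stacks against the arrow structure of a linear type ending in `⋆`. -/
inductive SJ : List Clo → LTy → ℕ → ℕ → Prop
  | nil : SJ [] .star 0 0
  | cons {c : Clo} {M : MTy} {S : List Clo} {A : LTy} {w v n m : ℕ} :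
      CJ c M w n → SJ S A v m →
      SJ (c :: S) (.arr M A) (max w v) (n + m)

/-- `StJ s w n`: rule T-st, typing a state with `⋆`. -/
inductive StJ : State → ℕ → ℕ → Prop
  | mk {t : Tm} {e : Env} {S : List Clo} {Γ : Ctx} {A : LTy} {w u v n m p : ℕ} :
      TJ Γ t A w n → EJ e Γ u m → SJ S A v p →
      StJ ⟨t, e, S⟩ (max w (max u v)) (n + m + p)

/-! ## Auxiliary development -/

mutual
def WFc : Clo → Prop
  | .mk t e => e.dom = fv t ∧ WFe e
def WFe : Env → Prop
  | .nil => True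
  | .cons x c e => x ∉ e.dom ∧ WFc c ∧ WFe e
end

lemma WFc_mk {t : Tm} {e : Env} : WFc (.mk t e) ↔ (e.dom = fv t ∧ WFe e) := by
  simp [WFc]

lemma restrict_dom : ∀ (e : Env) (V : Finset ℕ), (e.restrict V).dom = e.dom ∩ V
  | .nil, V => by simp [Env.restrict, Env.dom]
  | .cons y c e, V => by
    by_cases h : y ∈ V
    · simp [Env.restrict, Env.dom, h, restrict_dom e V, Finset.insert_inter_of_mem h]
    · simp [Env.restrict, Env.dom, h, restrict_dom e V, Finset.insert_inter_of_notMem h]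

lemma restrict_WF : ∀ {e : Env}, WFe e → ∀ (V : Finset ℕ), WFe (e.restrict V)
  | .nil, h, V => by simpa [Env.restrict] using h
  | .cons y c e, h, V => by
    obtain ⟨h1, h2, h3⟩ := h
    by_cases hy : y ∈ V
    · simp only [Env.restrict, hy, if_true]
      refine ⟨?_, h2, restrict_WF h3 V⟩
      rw [restrict_dom]
      intro hmem
      exact h1 (Finset.mem_inter.mp hmem).1
    · simp only [Env.restrict, hy, if_false]
      exact restrict_WF h3 V

lemma lookup_WF : ∀ {e : Env} {x : ℕ} {c : Clo}, WFe e → e.lookup x = some c → WFc c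
  | .nil, x, c, h, hl => by simp [Env.lookup] at hl
  | .cons y c' e, x, c, h, hl => by
    obtain ⟨_, h2, h3⟩ := h
    by_cases hxy : x = y
    · simp [Env.lookup, hxy] at hl; rwa [← hl]
    · simp [Env.lookup, hxy] at hl; exact lookup_WF h3 hl

def WFState (s : State) : Prop :=
  s.env.dom = fv s.tm ∧ WFe s.env ∧ ∀ c ∈ s.stk, WFc c

lemma step_WF {s s' : State} (hs : SpKAM s s') (h : WFState s) : WFState s' := by
  obtain ⟨hd, he, hS⟩ := h
  cases hs with
  | @sea_v t x e S c hl =>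
    refine ⟨?_, restrict_WF he _, ?_⟩
    · rw [restrict_dom, hd]
      simp only [fv]
      exact Finset.inter_eq_right.mpr Finset.subset_union_left
    · intro c' hc'
      rcases List.mem_cons.mp hc' with h | h
      · subst h; exact lookup_WF he hl
      · exact hS _ h
  | @sea_nv t u e S hnv =>
    refine ⟨?_, restrict_WF he _, ?_⟩
    · rw [restrict_dom, hd]
      simp only [fv]
      exact Finset.inter_eq_right.mpr Finset.subset_union_left
    · intro c' hc'
      rcases List.mem_cons.mp hc' with h | h
      · subst h
        refine ⟨?_, restrict_WF he _⟩
        rw [restrict_dom, hd]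
        simp only [fv]
        exact Finset.inter_eq_right.mpr Finset.subset_union_right
      · exact hS _ h
  | @beta_w x t e c S hx =>
    refine ⟨?_, he, fun c' hc' => hS _ (List.mem_cons_of_mem _ hc')⟩
    rw [hd]
    simp only [fv]
    exact Finset.sdiff_eq_self_of_disjoint (by simp [hx])
  | @beta_nw x t e c S hx =>
    have hxe : x ∉ e.dom := by
      rw [hd]; simp [fv]
    refine ⟨?_, ⟨hxe, hS _ List.mem_cons_self, he⟩,
      fun c' hc' => hS _ (List.mem_cons_of_mem _ hc')⟩
    simp only [Env.dom, hd, fv]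
    ext y
    by_cases hyx : y = x <;> simp [hyx, hx]
  | @sub x e e' u S hl =>
    have hwc : WFc (Clo.mk u e') := lookup_WF he hl
    exact ⟨hwc.1, hwc.2, hS⟩

lemma reach_WF {s : State} (hr : Reachable s) : WFState s := by
  obtain ⟨t₀, ht₀, hrun⟩ := hr
  induction hrun with
  | refl => exact ⟨by simp [Env.dom, ht₀], trivial, by simp⟩
  | tail _ hstep ih => exact step_WF hstep ih

mutual
theorem cloClosuresWF : ∀ c : Clo, WFc c → ∀ c' ∈ c.closures, WFc c'
  | .mk t e, h, c', hc' => by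
    rcases List.mem_cons.mp hc' with h' | h'
    · subst h'; exact h
    · exact envClosuresWF e h.2 c' h'
theorem envClosuresWF : ∀ e : Env, WFe e → ∀ c' ∈ e.closures, WFc c'
  | .nil, _, c', hc' => by simp [Env.closures] at hc'
  | .cons x c e, h, c', hc' => by
    rcases List.mem_append.mp hc' with h' | h'
    · exact cloClosuresWF c h.2.1 c' h'
    · exact envClosuresWF e h.2.2 c' h'
end

lemma extend_dry {Γ : Ctx} {x : ℕ} {k : ℕ} (hΓ : Γ.Dry) (hk : 0 < k) :
    (Γ.extend x (MTy.mk [] k)).Dry := by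
  intro y hy
  by_cases hyx : y = x
  · subst hyx
    exact ⟨k, hk, by simp [Ctx.extend, Function.update_self]⟩
  · have : y ∈ Γ.dom := by
      simpa [Ctx.extend, hyx] using hy
    obtain ⟨k', hk', hty⟩ := hΓ y this
    exact ⟨k', hk', by simp [Ctx.extend, Function.update_of_ne hyx, hty]⟩

mutual
theorem cloTypable : ∀ c : Clo, WFc c → ∃ k w n, 0 < k ∧ CJ c (MTy.mk [] k) w n
  | .mk t e, h => by
    obtain ⟨Γ, w, n, hEJ, hdry, hdom⟩ := envTypable e h.2
    refine ⟨1 + Γ.size, max w 0, n + 0, by omega, ?_⟩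
    exact CJ.mk hEJ (MJ.none hdry (hdom.trans h.1))
theorem envTypable : ∀ e : Env, WFe e → ∃ Γ w n, EJ e Γ w n ∧ Γ.Dry ∧ Γ.dom = e.dom
  | .nil, _ => ⟨Ctx.empty, 0, 0, EJ.nil, fun x hx => by simp [Ctx.empty] at hx,
      by simp [Ctx.empty, Env.dom]⟩
  | .cons x c e, h => by
    obtain ⟨hx, hc, he⟩ := h
    obtain ⟨Γ, w, n, hEJ, hdry, hdom⟩ := envTypable e he
    obtain ⟨k, wc, nc, hk, hCJ⟩ := cloTypable c hc
    refine ⟨Γ.extend x (MTy.mk [] k), max wc w, nc + n,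
      EJ.cons (hdom ▸ hx) hCJ hEJ, extend_dry hdry hk, ?_⟩
    simp [Ctx.extend, Env.dom, hdom]
end

/-- every closure occurring in a reachable state is typable with
an empty multiset type `[]^k` (k > 0), and every environment occurring in a
reachable state is typable with a dry context of matching domain. -/
theorem closures_and_envs_typable {s : State} (hr : Reachable s) :
    (∀ c ∈ s.closures, ∃ k w n, 0 < k ∧ CJ c (MTy.mk [] k) w n) ∧
    (∀ c ∈ s.closures, ∃ Γ w n, EJ c.env Γ w n ∧ Γ.Dry ∧ Γ.dom = c.env.dom) := by
  have hWF := reach_WF hr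
  have key : ∀ c ∈ s.closures, WFc c := by
    intro c hc
    rcases List.mem_append.mp hc with h | h
    · exact cloClosuresWF _ (WFc_mk.mpr ⟨hWF.1, hWF.2.1⟩) _ h
    · rw [List.mem_flatten] at h
      obtain ⟨l, hl, hcl⟩ := h
      rw [List.mem_map] at hl
      obtain ⟨c', hc', rfl⟩ := hl
      exact cloClosuresWF _ (hWF.2.2 _ hc') _ hcl
  constructor
  · intro c hc
    obtain ⟨k, w, n, hk, hCJ⟩ := cloTypable c (key c hc)
    exact ⟨k, w, n, hk, hCJ⟩
  · intro c hc
    have hwc := key c hc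
    obtain ⟨t, e⟩ := c
    exact envTypable e (WFc_mk.mp hwc).2
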